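/- Let Φ : A^A → A be a continuous function (A discrete, A^A with product topology) with base 𝓑 (a set of finite partial functions p such that Φ is constant on each basic open U_p = {α : p ⊆ α}, and every α extends some p ∈ 𝓑). Then for any finite partial function s, either Φ is constant on U_s, or there exists a finite subset C of A − dom(s) such that every p ∈ 𝓑 compatible with s has dom(p) ∩ C ≠ ∅. -/

import Mathlib

open Classical

noncomputable section

namespace OostenK2

universe u

/-! ### Finite partial functions -/

/-- Finite partial functions `A ⇀ A`, as finite functional graphs,
ordered by inclusion of graphs. -/
abbrev FPF (A : Type u) : Type u :=
  {p : Set (A × A) // (∀ ⦃a b b'⦄, (a, b) ∈ p → (a, b') ∈ p → b = b') ∧ p.Finite}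

variable {A : Type u}

/-- The domain of a finite partial function. -/
def FPF.dom (p : FPF A) : Set A := Prod.fst '' p.val

/-- The empty finite partial function (the root of sequential trees). -/
def FPF.empty (A : Type u) : FPF A :=
  ⟨∅, fun _ _ _ h => absurd h (Set.notMem_empty _), Set.finite_empty⟩

/-- A total function `α` extends the finite partial function `p`. -/
def agrees (α : A → A) (p : FPF A) : Prop := ∀ ⦃a b⦄, (a, b) ∈ p.val → α a = b

/-- A partial function `β` extends the finite partial function `p`. -/
def agreesP (β : A → Option A) (p : FPF A) : Prop :=
  ∀ ⦃a b⦄, (a, b) ∈ p.val → β a = some b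

/-- Two finite partial functions are compatible if their union is a function. -/
def compatFPF (s t : FPF A) : Prop :=
  ∀ ⦃a b b'⦄, (a, b) ∈ s.val → (a, b') ∈ t.val → b = b'

/-! ### Trees -/

section Trees

variable {X : Type*} [PartialOrder X]

/-- A leaf of `T`: an element of `T` with no strict extension in `T`. -/
def IsLeaf (T : Set X) (p : X) : Prop := p ∈ T ∧ ¬∃ q ∈ T, p < q

/-- `q` is an immediate successor of `p` in `T`. -/
def ImmSucc (T : Set X) (p q : X) : Prop :=
  q ∈ T ∧ p < q ∧ ¬∃ t ∈ T, p < t ∧ t < q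

/-- `T` is a tree with root `root`: the root belongs to `T`, lies below every
element, and the predecessors of any element form a chain. -/
def IsTreeOn (root : X) (T : Set X) : Prop :=
  root ∈ T ∧ (∀ p ∈ T, root ≤ p) ∧ ∀ p ∈ T, IsChain (· ≤ ·) {t | t ∈ T ∧ t ≤ p}

/-- A tree is well-founded iff it has no infinite strictly increasing path. -/
def WellFoundedTree (T : Set X) : Prop :=
  ¬∃ f : ℕ → X, (∀ n, f n ∈ T) ∧ StrictMono f

end Trees

/-- A sequential tree: a tree of finite partial functions, rooted at the empty
function, in which all immediate successors of a non-leaf `p` have domain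
`dom p ∪ {a}` for a single `a ∉ dom p`. -/
def IsSeqTree (T : Set (FPF A)) : Prop :=
  IsTreeOn (FPF.empty A) T ∧
  ∀ p ∈ T, ¬IsLeaf T p →
    ∃ a ∉ FPF.dom p, ∀ q, ImmSucc T p q → FPF.dom q = insert a (FPF.dom p)

/-- A total sequential tree: the immediate successors of a non-leaf `p` are
*all* extensions of `p` with domain `dom p ∪ {a}`. -/
def IsTotalSeqTree (T : Set (FPF A)) : Prop :=
  IsTreeOn (FPF.empty A) T ∧
  ∀ p ∈ T, ¬IsLeaf T p →
    ∃ a ∉ FPF.dom p,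
      ∀ q : FPF A, ImmSucc T p q ↔ p < q ∧ FPF.dom q = insert a (FPF.dom p)

/-- `Φ` (as a relation `(A → A) → A → Prop`) is a partial sequential function:
`Φ α = b` iff the path of `α` through some total sequential tree `T` ends in a
leaf `v` with `F v = b`. -/
def SeqRel (Φ : (A → A) → A → Prop) : Prop :=
  ∃ (T : Set (FPF A)) (F : FPF A → A), IsTotalSeqTree T ∧
    ∀ α b, Φ α b ↔ ∃ v, IsLeaf T v ∧ agrees α v ∧ F v = b

/-- A total bisequential tree: pairs of finite partial functions ordered by
pairwise inclusion; at every non-leaf, either the first or the second component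
is interrogated at a single new argument, with all possible answers present. -/
def IsTotalBiTree (T : Set (FPF A × FPF A)) : Prop :=
  IsTreeOn (FPF.empty A, FPF.empty A) T ∧
  ∀ p ∈ T, ¬IsLeaf T p →
    (∃ a ∉ FPF.dom p.1, ∀ q : FPF A × FPF A,
        ImmSucc T p q ↔ q.2 = p.2 ∧ p.1 ≤ q.1 ∧ FPF.dom q.1 = insert a (FPF.dom p.1)) ∨
    (∃ b ∉ FPF.dom p.2, ∀ q : FPF A × FPF A,
        ImmSucc T p q ↔ q.1 = p.1 ∧ p.2 ≤ q.2 ∧ FPF.dom q.2 = insert b (FPF.dom p.2))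

/-- `G` is a total bisequential function. -/
def BiSeqTotal (G : (A → A) → (A → A) → A) : Prop :=
  ∃ (T : Set (FPF A × FPF A)) (F : FPF A × FPF A → A), IsTotalBiTree T ∧
    ∀ α β, ∃ v, IsLeaf T v ∧ agrees α v.1 ∧ agrees β v.2 ∧ G α β = F v

/-! ### Interrogations (total functions)

Throughout, `mk : List A → A` is an injective coding of finite sequences,
`qp b` is the code `⟨q,b⟩` of a query and `rp c` the code `⟨r,c⟩` of a result. -/

/-- `L` is an interrogation of `β` by `α`. -/
def Interrog (mk : List A → A) (qp : A → A) (α β : A → A) (L : List A) : Prop :=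
  ∀ j (hj : j < L.length), ∃ b, α (mk (L.take j)) = qp b ∧ β b = L[j]'hj

/-- `φ_α(β) = c` via interrogations. -/
def phiRel (mk : List A → A) (qp rp : A → A) (α β : A → A) (c : A) : Prop :=
  ∃ L, Interrog mk qp α β L ∧ α (mk L) = rp c

/-- `L` is an `a`-interrogation of `β` by `α`. -/
def AInterrog (mk : List A → A) (qp : A → A) (a : A) (α β : A → A) (L : List A) : Prop :=
  ∀ j (hj : j < L.length), ∃ b, α (mk (a :: L.take j)) = qp b ∧ β b = L[j]'hj

/-- `φ^a(α,β) = c` via `a`-interrogations. -/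
def phiA (mk : List A → A) (qp rp : A → A) (a : A) (α β : A → A) (c : A) : Prop :=
  ∃ L, AInterrog mk qp a α β L ∧ α (mk (a :: L)) = rp c

/-- The application of `K₂(A)`: `αβ` is defined with value `γ` iff
`φ^a(α,β) = γ a` for every `a`. -/
def AppRel (mk : List A → A) (qp rp : A → A) (α β γ : A → A) : Prop :=
  ∀ a, phiA mk qp rp a α β (γ a)

/-! ### Partial combinatory algebras (abstractly) -/

/-- A set with a partial binary application. -/
structure PCAStruct (X : Type*) where
  app : X → X → Part X

/-- Extension of the application to `Part`; `Part`-equality is Kleene equality. -/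
def pap {X : Type*} (S : PCAStruct X) (u v : Part X) : Part X :=
  u.bind fun a => v.bind fun b => S.app a b

/-- `S` is a partial combinatory algebra: there are `k`, `s` with
`kxy = x` (everywhere defined), `sxy` defined, and `sxyz ≃ (xz)(yz)`. -/
def IsPCA {X : Type*} (S : PCAStruct X) : Prop :=
  ∃ k s : X,
    (∀ x y : X, pap S (S.app k x) (Part.some y) = Part.some x) ∧
    (∀ x y : X, (pap S (S.app s x) (Part.some y)).Dom) ∧
    (∀ x y z : X,
      pap S (pap S (S.app s x) (Part.some y)) (Part.some z)
        = pap S (S.app x z) (S.app y z))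

/-- `t`, `f` are Booleans of `S`: distinct, with a definition-by-cases combinator. -/
def IsBooleans {X : Type*} (S : PCAStruct X) (t f : X) : Prop :=
  t ≠ f ∧ ∃ C : X, ∀ a b : X,
    pap S (pap S (S.app C t) (Part.some a)) (Part.some b) = Part.some a ∧
    pap S (pap S (S.app C f) (Part.some a)) (Part.some b) = Part.some b

/-- Applicative morphism `γ : S → T`: a total relation such that some realizer
`r` tracks application. -/
def IsAppMor {X Y : Type*} (S : PCAStruct X) (T : PCAStruct Y) (γ : X → Set Y) : Prop :=
  (∀ x, (γ x).Nonempty) ∧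
  ∃ r : Y, ∀ x x' z : X, z ∈ S.app x x' → ∀ b ∈ γ x, ∀ b' ∈ γ x',
    ∃ w, w ∈ pap T (T.app r b) (Part.some b') ∧ w ∈ γ z

/-- The preorder on applicative morphisms. -/
def morLE {X Y : Type*} (T : PCAStruct Y) (γ γ' : X → Set Y) : Prop :=
  ∃ s : Y, ∀ x : X, ∀ b ∈ γ x, ∃ c, c ∈ T.app s b ∧ c ∈ γ' x

def morEquiv {X Y : Type*} (T : PCAStruct Y) (γ γ' : X → Set Y) : Prop :=
  morLE T γ γ' ∧ morLE T γ' γ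

/-- Composition of applicative morphisms (as total relations). -/
def morComp {X Y Z : Type*} (γ : X → Set Y) (ε : Y → Set Z) : X → Set Z :=
  fun x => ⋃ y ∈ γ x, ε y

/-- Decidability of a morphism w.r.t. chosen Booleans. -/
def IsDecidableMor {X Y : Type*} (T : PCAStruct Y) (γ : X → Set Y)
    (tX fX : X) (tY fY : Y) : Prop :=
  ∃ d : Y, (∀ b ∈ γ tX, T.app d b = Part.some tY) ∧
    (∀ b ∈ γ fX, T.app d b = Part.some fY)

/-- `rf` represents the partial function `f : X ⇀ X` w.r.t. `γ`. -/
def RepresentsPFun {X Y : Type*} (T : PCAStruct Y) (γ : X → Set Y)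
    (f : X → Option X) (rf : Y) : Prop :=
  ∀ a x, f a = some x → ∀ b ∈ γ a, ∃ c, c ∈ T.app rf b ∧ c ∈ γ x

/-- The pca `K₂(A)` on `A^A` (application via `a`-interrogations). -/
def K2 (mk : List A → A) (qp rp : A → A) : PCAStruct (A → A) where
  app α β := ⟨∀ a, ∃ c, phiA mk qp rp a α β c, fun h a => (h a).choose⟩

/-! ### Interrogations for partial functions -/

/-- Interrogation of a partial `β` by a partial `α`. -/
def PInterrog (mk : List A → A) (qp : A → A) (α β : A → Option A) (L : List A) : Prop :=
  ∀ j (hj : j < L.length), ∃ b, α (mk (L.take j)) = some (qp b) ∧ β b = some (L[j]'hj)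

/-- `φ_α(β) = c` for partial functions. -/
def phiPRel (mk : List A → A) (qp rp : A → A) (α β : A → Option A) (c : A) : Prop :=
  ∃ L, PInterrog mk qp α β L ∧ α (mk L) = some (rp c)

/-- `a`-interrogation of a partial `β` by a partial `α`. -/
def PAInterrog (mk : List A → A) (qp : A → A) (a : A) (α β : A → Option A)
    (L : List A) : Prop :=
  ∀ j (hj : j < L.length), ∃ b, α (mk (a :: L.take j)) = some (qp b) ∧ β b = some (L[j]'hj)

/-- `φ^a(α,β) = c` for partial functions. -/
def phiPA (mk : List A → A) (qp rp : A → A) (a : A) (α β : A → Option A) (c : A) : Prop :=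
  ∃ L, PAInterrog mk qp a α β L ∧ α (mk (a :: L)) = some (rp c)

/-- The (total!) application of `K₂^p(A)` on partial functions. -/
def K2pApp (mk : List A → A) (qp rp : A → A) (α β : A → Option A) : A → Option A :=
  fun a => if h : ∃ c, phiPA mk qp rp a α β c then some h.choose else none

/-- `K₂^p(A)` as a `PCAStruct` (with everywhere-defined application). -/
def K2p (mk : List A → A) (qp rp : A → A) : PCAStruct (A → Option A) :=
  ⟨fun α β => Part.some (K2pApp mk qp rp α β)⟩

/-! ### A pca with standard structure (Booleans, pairing, tuple coding, recursion) -/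

/-- A pca together with the standard derived structure: Booleans with a case
combinator, pairing, an injective standard tuple coding with combinators
manipulating it, and a fixed-point combinator. All of these exist in any
(nontrivial) pca. -/
structure StdPCA (A : Type u) where
  S : PCAStruct A
  isPCA : IsPCA S
  t : A
  f : A
  t_ne_f : t ≠ f
  Cc : A
  C_t : ∀ a b : A, pap S (pap S (S.app Cc t) (Part.some a)) (Part.some b) = Part.some a
  C_f : ∀ a b : A, pap S (pap S (S.app Cc f) (Part.some a)) (Part.some b) = Part.some b
  pairF : A → A → A
  Pc : A
  P0 : A
  P1 : A
  P_spec : ∀ x y : A, pap S (S.app Pc x) (Part.some y) = Part.some (pairF x y)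
  P0_spec : ∀ x y : A, S.app P0 (pairF x y) = Part.some x
  P1_spec : ∀ x y : A, S.app P1 (pairF x y) = Part.some y
  tup : List A → A
  tup_inj : Function.Injective tup
  CONS : A
  CONS_spec : ∀ (x : A) (L : List A),
    pap S (S.app CONS x) (Part.some (tup L)) = Part.some (tup (x :: L))
  SNOC : A
  SNOC_spec : ∀ (L : List A) (y : A),
    pap S (S.app SNOC (tup L)) (Part.some y) = Part.some (tup (L ++ [y]))
  Zc : A
  Z_spec : ∀ g : A, (S.app Zc g).Dom ∧ ∀ zg ∈ S.app Zc g, ∀ x : A,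
    S.app zg x = pap S (S.app g zg) (Part.some x)

/-- The partial function `x ↦ a·x` represented by `a ∈ A`. -/
def abar (P : StdPCA A) (a : A) : A → Option A :=
  fun x => if h : (P.S.app a x).Dom then some ((P.S.app a x).get h) else none

/-- An `x`-interrogation of the oracle `g : A ⇀ A` by `a ∈ A`, inside the pca. -/
def OInterrog (P : StdPCA A) (g : A → Option A) (a x : A) (L : List A) : Prop :=
  ∀ j (hj : j < L.length), ∃ v,
    P.S.app a (P.tup (x :: L.take j)) = Part.some (P.pairF P.f v) ∧ g v = some (L[j]'hj)

/-- The oracle application of `A[g]` : `a ·^g x = c`. -/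
def oapp (P : StdPCA A) (g : A → Option A) (a x c : A) : Prop :=
  ∃ L, OInterrog P g a x L ∧ P.S.app a (P.tup (x :: L)) = Part.some (P.pairF P.t c)

/-- `fn ≤_T g` : `fn` is representable in `A[g]`. -/
def leT (P : StdPCA A) (fn g : A → Option A) : Prop :=
  ∃ a : A, ∀ x y, fn x = some y → oapp P g a x y

/-- `j` is the join `f ⊔ g`. -/
def JoinSpec (P : StdPCA A) (f g j : A → Option A) : Prop :=
  (∀ x, j (P.pairF P.t x) = f x) ∧ (∀ x, j (P.pairF P.f x) = g x) ∧
  (∀ y, (∀ x, y ≠ P.pairF P.t x ∧ y ≠ P.pairF P.f x) → j y = none)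

/-- `K₂(A)` (built from the coding `mk`, `q`, `r`) is compatible with the pca
structure on `A`: elements of `A` translate between the codings and between
`q, r` and `⊥, ⊤`. -/
def CompatCoding (P : StdPCA A) (mk : List A → A) (q r : A) : Prop :=
  (∃ a : A, ∀ L, P.S.app a (mk L) = Part.some (P.tup L)) ∧
  (∃ b : A, ∀ L, P.S.app b (P.tup L) = Part.some (mk L)) ∧
  (∃ c : A, P.S.app c q = Part.some P.f ∧ P.S.app c r = Part.some P.t)

/-- `𝓑` is a base for the continuous `Φ`: `Φ` is constant on each `U_p`,
`p ∈ 𝓑`, and every `α` extends some `p ∈ 𝓑`. -/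
def IsBase {A : Type u} (Φ : (A → A) → A) (𝓑 : Set (FPF A)) : Prop :=
  (∀ p ∈ 𝓑, ∀ α β : A → A, agrees α p → agrees β p → Φ α = Φ β) ∧
  (∀ α : A → A, ∃ p ∈ 𝓑, agrees α p)

/-! If no finite `C` works, take `p, q ∈ 𝓑` with `α ∈ U_p`, `β ∈ U_q`, and `r ∈ 𝓑` compatible
with `s` whose domain misses `(dom p ∪ dom q) − dom s`. Overwriting `α` and `β` by `r` keeps them
in `U_p` and `U_q` respectively, since `r` only changes values on `dom s`, where it agrees with
`α` and `β`; and it puts both in `U_r`. Hence `Φ α = Φ (r.override α) = Φ (r.override β) = Φ β`. -/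

namespace FPF

theorem mem_dom {p : FPF A} {a : A} : a ∈ p.dom ↔ ∃ b, (a, b) ∈ p.val := by
  simp [dom]

theorem dom_finite (p : FPF A) : p.dom.Finite :=
  p.prop.2.image _

def override (r : FPF A) (α : A → A) (a : A) : A :=
  if h : ∃ b, (a, b) ∈ r.val then h.choose else α a

theorem override_apply_of_mem {r : FPF A} (α : A → A) {a b : A} (hab : (a, b) ∈ r.val) :
    r.override α a = b := by
  have h : ∃ b, (a, b) ∈ r.val := ⟨b, hab⟩
  rw [override, dif_pos h]
  exact r.prop.1 h.choose_spec hab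

theorem override_apply_of_notMem_dom {r : FPF A} (α : A → A) {a : A} (ha : a ∉ r.dom) :
    r.override α a = α a := by
  rw [override, dif_neg (mem_dom.not.mp ha)]

theorem agrees_override (r : FPF A) (α : A → A) : agrees (r.override α) r :=
  fun _ _ hab => override_apply_of_mem α hab

theorem agrees_override_of_compat {p r s : FPF A} {α : A → A} (hαp : agrees α p)
    (hαs : agrees α s) (hrs : compatFPF r s) (hdom : p.dom ∩ r.dom ⊆ s.dom) :
    agrees (r.override α) p := by
  intro a b hab
  by_cases har : a ∈ r.dom
  · obtain ⟨c, hc⟩ := mem_dom.mp har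
    obtain ⟨d, hd⟩ := mem_dom.mp (hdom ⟨mem_dom.mpr ⟨b, hab⟩, har⟩)
    rw [override_apply_of_mem α hc, hrs hc hd, ← hαs hd, hαp hab]
  · rw [override_apply_of_notMem_dom α har, hαp hab]

end FPF

theorem IsBase.eq_of_forall_exists_compat_avoiding {Φ : (A → A) → A} {𝓑 : Set (FPF A)}
    (h𝓑 : IsBase Φ 𝓑) {s : FPF A}
    (havoid : ∀ C : Finset A, (∀ c ∈ C, c ∉ s.dom) →
      ∃ p ∈ 𝓑, compatFPF p s ∧ ∀ c ∈ C, c ∉ p.dom)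
    {α β : A → A} (hα : agrees α s) (hβ : agrees β s) : Φ α = Φ β := by
  obtain ⟨p, hp, hαp⟩ := h𝓑.2 α
  obtain ⟨q, hq, hβq⟩ := h𝓑.2 β
  have hfin : ((p.dom ∪ q.dom) \ s.dom).Finite := (p.dom_finite.union q.dom_finite).sdiff
  obtain ⟨r, hr, hrs, hrC⟩ := havoid hfin.toFinset fun c hc => (hfin.mem_toFinset.mp hc).2
  have hdom : (p.dom ∪ q.dom) ∩ r.dom ⊆ s.dom := fun a ⟨hpq, har⟩ =>
    by_contra fun has => hrC a (hfin.mem_toFinset.mpr ⟨hpq, has⟩) har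
  calc Φ α = Φ (r.override α) :=
        h𝓑.1 p hp _ _ hαp (FPF.agrees_override_of_compat hαp hα hrs
          ((Set.inter_subset_inter_left _ Set.subset_union_left).trans hdom))
    _ = Φ (r.override β) := h𝓑.1 r hr _ _ (r.agrees_override α) (r.agrees_override β)
    _ = Φ β := (h𝓑.1 q hq _ _ hβq (FPF.agrees_override_of_compat hβq hβ hrs
          ((Set.inter_subset_inter_left _ Set.subset_union_right).trans hdom))).symm

theorem statement2_general {A : Type u} (Φ : (A → A) → A)
    (𝓑 : Set (FPF A)) (h𝓑 : IsBase Φ 𝓑) (s : FPF A) :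
    (∀ α β : A → A, agrees α s → agrees β s → Φ α = Φ β) ∨
    ∃ C : Finset A, (∀ c ∈ C, c ∉ FPF.dom s) ∧
      ∀ p ∈ 𝓑, compatFPF p s → ∃ c ∈ C, c ∈ FPF.dom p := by
  refine or_iff_not_imp_right.mpr fun hC _ _ hα hβ => ?_
  push Not at hC
  exact h𝓑.eq_of_forall_exists_compat_avoiding hC hα hβ

/-- For a continuous `Φ : A^A → A` with base `𝓑` and any
finite partial function `s`: either `Φ` is constant on `U_s`, or some finite
`C ⊆ A − dom s` meets the domain of every `p ∈ 𝓑` compatible with `s`. -/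
theorem statement2 {A : Type u} (Φ : (A → A) → A)
    (hΦ : letI : TopologicalSpace A := ⊥; Continuous Φ)
    (𝓑 : Set (FPF A)) (h𝓑 : IsBase Φ 𝓑) (s : FPF A) :
    (∀ α β : A → A, agrees α s → agrees β s → Φ α = Φ β) ∨
    ∃ C : Finset A, (∀ c ∈ C, c ∉ FPF.dom s) ∧
      ∀ p ∈ 𝓑, compatFPF p s → ∃ c ∈ C, c ∈ FPF.dom p :=
  statement2_general Φ 𝓑 h𝓑 s

end OostenK2
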